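/- arXiv:2110.11771 — 8 statements merged into one kernel-verified Lean document; each statement's English description precedes it below -/
import Mathlib

section
/- Let (T, 𝒜, μ) be a finite measure space with 0 < μ(T) < ∞, let T₀ ∈ 𝒜 with μ(T₀) > 0, let f̃ : T₀ → ℝ be measurable with f̃ > 0 and ∫_{T₀} (log f̃)^2 dμ < ∞, and let g : T → ℝ be measurable with g > 0 and ∫_T (log g)^2 dμ < ∞. Define the embedding ι(f̃) : T → ℝ by ι(f̃)(t) = f̃(t) for t ∈ T₀ and ι(f̃)(t) = exp(S_{μ,T₀}(f̃)) for t ∈ T ∖ T₀. Then S_{μ,T}(ι(f̃)) = S_{μ,T₀}(f̃), and the embedding preserves the Bayes inner product: ∫_T (log ι(f̃) − S_{μ,T}(ι(f̃))) · (log g − S_{μ,T}(g)) dμ = ∫_{T₀} (log f̃ − S_{μ,T₀}(f̃)) · (log g − S_{μ,T₀}(g)) dμ. -/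
open MeasureTheory

/-- Mean logarithmic integral of `f` over a measurable set `A`:
`S_{μ,A}(f) = (1/μ(A)) ∫_A log f dμ`. -/
noncomputable def Sm {T : Type*} [MeasurableSpace T] (μ : Measure T) (A : Set T)
    (f : T → ℝ) : ℝ :=
  (μ A).toReal⁻¹ * ∫ t in A, Real.log (f t) ∂μ

open scoped Classical in
/-- The canonical embedding of a density on `T₀` into the Bayes Hilbert space on `T`: it equals
`f` on `T₀` and the geometric mean `exp(S_{μ,T₀}(f))` off `T₀`. -/
noncomputable def iota {T : Type*} [MeasurableSpace T] (μ : Measure T) (T₀ : Set T)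
    (f : T → ℝ) (t : T) : ℝ :=
  if t ∈ T₀ then f t else Real.exp (Sm μ T₀ f)

/-!
On `T₀` the logarithm of `ι(f̃)` is `log f̃`, and off `T₀` it is the constant `S_{μ,T₀}(f̃)`, so
averaging over `T` does not move the mean. Hence the centred logarithm of `ι(f̃)` is the centred
`log f̃` extended by zero, and the inner product reduces to an integral over `T₀`. There the
centred `log g` may be recentred by any constant, since the centred `log f̃` has integral zero.
-/

theorem integral_mul_sub_const_eq_of_integral_eq_zero {α : Type*} [MeasurableSpace α]
    {μ : Measure α} {u v : α → ℝ} (c d : ℝ) (huv : Integrable (fun x => u x * (v x - d)) μ)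
    (hu : Integrable u μ) (hu0 : ∫ x, u x ∂μ = 0) :
    ∫ x, u x * (v x - c) ∂μ = ∫ x, u x * (v x - d) ∂μ :=
  calc ∫ x, u x * (v x - c) ∂μ = ∫ x, u x * (v x - d) + (d - c) * u x ∂μ := by
        congr 1; ext x; ring
    _ = ∫ x, u x * (v x - d) ∂μ := by
        rw [integral_add huv (hu.const_mul _), integral_const_mul, hu0, mul_zero, add_zero]

namespace Sm

variable {T : Type*} [MeasurableSpace T] {μ : Measure T} {A : Set T} {f : T → ℝ}

theorem setIntegral_log_eq (hA : μ A ≠ 0) (hA' : μ A ≠ ⊤) :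
    ∫ t in A, Real.log (f t) ∂μ = (μ A).toReal * Sm μ A f := by
  rw [Sm, ← mul_assoc, mul_inv_cancel₀ (ENNReal.toReal_ne_zero.2 ⟨hA, hA'⟩), one_mul]

theorem setIntegral_log_sub_eq_zero (hA : μ A ≠ 0) (hA' : μ A ≠ ⊤)
    (hf : IntegrableOn (fun t => Real.log (f t)) A μ) :
    ∫ t in A, (Real.log (f t) - Sm μ A f) ∂μ = 0 := by
  rw [integral_sub hf (integrableOn_const hA'), setIntegral_log_eq hA hA', setIntegral_const,
    smul_eq_mul, measureReal_def, sub_self]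

end Sm

namespace iota

variable {T : Type*} [MeasurableSpace T] {μ : Measure T} {T₀ : Set T} {f : T → ℝ}

theorem log_of_mem {t : T} (ht : t ∈ T₀) : Real.log (iota μ T₀ f t) = Real.log (f t) := by
  rw [iota, if_pos ht]

theorem log_of_notMem {t : T} (ht : t ∉ T₀) : Real.log (iota μ T₀ f t) = Sm μ T₀ f := by
  rw [iota, if_neg ht, Real.log_exp]

theorem log_sub_Sm_eq_indicator (t : T) :
    Real.log (iota μ T₀ f t) - Sm μ T₀ f =
      T₀.indicator (fun t => Real.log (f t) - Sm μ T₀ f) t := by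
  by_cases ht : t ∈ T₀
  · rw [Set.indicator_of_mem ht, log_of_mem ht]
  · rw [Set.indicator_of_notMem ht, log_of_notMem ht, sub_self]

theorem integral_log_sub_Sm_mul (hT₀ : MeasurableSet T₀) (φ : T → ℝ) :
    ∫ t, (Real.log (iota μ T₀ f t) - Sm μ T₀ f) * φ t ∂μ =
      ∫ t in T₀, (Real.log (f t) - Sm μ T₀ f) * φ t ∂μ := by
  simp_rw [log_sub_Sm_eq_indicator, ← Set.indicator_mul_left]
  exact integral_indicator hT₀

variable [IsFiniteMeasure μ]

theorem integral_log (hT₀ : MeasurableSet T₀) (hT₀pos : μ T₀ ≠ 0)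
    (hf : IntegrableOn (fun t => Real.log (f t)) T₀ μ) :
    ∫ t, Real.log (iota μ T₀ f t) ∂μ = (μ Set.univ).toReal * Sm μ T₀ f := by
  have h_on : ∫ t in T₀, Real.log (iota μ T₀ f t) ∂μ = μ.real T₀ * Sm μ T₀ f := by
    rw [setIntegral_congr_fun hT₀ fun t ht => log_of_mem ht,
      Sm.setIntegral_log_eq hT₀pos (measure_ne_top μ T₀), measureReal_def]
  have h_off : ∫ t in T₀ᶜ, Real.log (iota μ T₀ f t) ∂μ = μ.real T₀ᶜ * Sm μ T₀ f := by
    rw [setIntegral_congr_fun hT₀.compl fun t ht => log_of_notMem ht, setIntegral_const,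
      smul_eq_mul]
  have h_int : Integrable (fun t => Real.log (iota μ T₀ f t)) μ := by
    have h_ind : Integrable (T₀.indicator fun t => Real.log (f t) - Sm μ T₀ f) μ :=
      (integrable_indicator_iff hT₀).2 (hf.sub (integrable_const _))
    refine (h_ind.add (integrable_const (Sm μ T₀ f))).congr ?_
    filter_upwards with t
    rw [Pi.add_apply, ← log_sub_Sm_eq_indicator, sub_add_cancel]
  rw [← integral_add_compl hT₀ h_int, h_on, h_off, ← add_mul,
    measureReal_add_measureReal_compl hT₀, measureReal_def]

theorem Sm_univ (hT₀ : MeasurableSet T₀) (hT₀pos : μ T₀ ≠ 0)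
    (hf : IntegrableOn (fun t => Real.log (f t)) T₀ μ) :
    Sm μ Set.univ (iota μ T₀ f) = Sm μ T₀ f := by
  have hμ : (μ Set.univ).toReal ≠ 0 := ENNReal.toReal_ne_zero.2
    ⟨fun h => hT₀pos (measure_mono_null (Set.subset_univ T₀) h), measure_ne_top μ _⟩
  rw [Sm, Measure.restrict_univ, integral_log hT₀ hT₀pos hf, ← mul_assoc, inv_mul_cancel₀ hμ,
    one_mul]

end iota

theorem iota_S_eq_and_preserves_inner_general
    {T : Type*} [MeasurableSpace T] (μ : Measure T)
    (hμfin : μ Set.univ < ⊤)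
    (T₀ : Set T) (hT₀meas : MeasurableSet T₀) (hT₀pos : 0 < μ T₀)
    (ft : T → ℝ) (hft : Measurable ft)
    (hftsq : IntegrableOn (fun t => (Real.log (ft t)) ^ 2) T₀ μ)
    (g : T → ℝ) (hg : Measurable g)
    (hgsq : Integrable (fun t => (Real.log (g t)) ^ 2) μ) :
    Sm μ Set.univ (iota μ T₀ ft) = Sm μ T₀ ft ∧
      ∫ t, (Real.log (iota μ T₀ ft t) - Sm μ Set.univ (iota μ T₀ ft)) *
          (Real.log (g t) - Sm μ Set.univ g) ∂μ =
        ∫ t in T₀, (Real.log (ft t) - Sm μ T₀ ft) *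
          (Real.log (g t) - Sm μ T₀ g) ∂μ := by
  have : IsFiniteMeasure μ := ⟨hμfin⟩
  have hlog_ft : MemLp (fun t => Real.log (ft t)) 2 (μ.restrict T₀) :=
    (memLp_two_iff_integrable_sq hft.log.aestronglyMeasurable).2 hftsq
  have hlog_g : MemLp (fun t => Real.log (g t)) 2 μ :=
    (memLp_two_iff_integrable_sq hg.log.aestronglyMeasurable).2 hgsq
  have hlog_ft_int := hlog_ft.integrable one_le_two
  have hS := iota.Sm_univ hT₀meas hT₀pos.ne' hlog_ft_int
  refine ⟨hS, ?_⟩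
  rw [hS, iota.integral_log_sub_Sm_mul hT₀meas]
  exact integral_mul_sub_const_eq_of_integral_eq_zero _ _
    ((hlog_ft.sub (memLp_const _)).integrable_mul (hlog_g.restrict T₀ |>.sub (memLp_const _)))
    (hlog_ft_int.sub (integrable_const _))
    (Sm.setIntegral_log_sub_eq_zero hT₀pos.ne' (measure_ne_top μ T₀) hlog_ft_int)

/-- The embedding `ι : B²(T₀) ↪ B²(T)` satisfies `S_{μ,T}(ι(f̃)) = S_{μ,T₀}(f̃)` and preserves
the Bayes inner product:
`∫_T clr_T[ι(f̃)] · clr_T[g] dμ = ∫_{T₀} clr_{T₀}[f̃] · clr_{T₀}[g] dμ`. -/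
theorem iota_S_eq_and_preserves_inner
    {T : Type*} [MeasurableSpace T] (μ : Measure T)
    (hμ0 : 0 < μ Set.univ) (hμfin : μ Set.univ < ⊤)
    (T₀ : Set T) (hT₀meas : MeasurableSet T₀) (hT₀pos : 0 < μ T₀)
    (ft : T → ℝ) (hft : Measurable ft) (hftpos : ∀ t ∈ T₀, 0 < ft t)
    (hftsq : IntegrableOn (fun t => (Real.log (ft t)) ^ 2) T₀ μ)
    (g : T → ℝ) (hg : Measurable g) (hgpos : ∀ t, 0 < g t)
    (hgsq : Integrable (fun t => (Real.log (g t)) ^ 2) μ) :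
    Sm μ Set.univ (iota μ T₀ ft) = Sm μ T₀ ft ∧
      ∫ t, (Real.log (iota μ T₀ ft t) - Sm μ Set.univ (iota μ T₀ ft)) *
          (Real.log (g t) - Sm μ Set.univ g) ∂μ =
        ∫ t in T₀, (Real.log (ft t) - Sm μ T₀ ft) *
          (Real.log (g t) - Sm μ T₀ g) ∂μ :=
  iota_S_eq_and_preserves_inner_general μ hμfin T₀ hT₀meas hT₀pos ft hft hftsq g hg hgsq
end

section
/- Let (T, 𝒜, μ) be a finite measure space with 0 < μ(T) < ∞, let T₀ ∈ 𝒜 with μ(T₀) > 0, and let f̃ : T₀ → ℝ be measurable with f̃ > 0 and ∫_{T₀} (log f̃)^2 dμ < ∞. Define ι(f̃) : T → ℝ by ι(f̃)(t) = f̃(t) for t ∈ T₀ and ι(f̃)(t) = exp(S_{μ,T₀}(f̃)) for t ∈ T ∖ T₀. Then the embedding preserves the Bayes Hilbert space norm: ∫_T (log ι(f̃) − S_{μ,T}(ι(f̃)))^2 dμ = ∫_{T₀} (log f̃ − S_{μ,T₀}(f̃))^2 dμ. -/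
open MeasureTheory

section

variable {T : Type*} [MeasurableSpace T] {μ : Measure T}

theorem measureReal_mul_Sm {A : Set T} (hA : μ A ≠ ⊤) (f : T → ℝ) :
    μ.real A * Sm μ A f = ∫ t in A, Real.log (f t) ∂μ := by
  rcases eq_or_ne (μ A) 0 with hA0 | hA0
  · simp [Measure.restrict_eq_zero.mpr hA0, measureReal_def, hA0]
  · rw [Sm, measureReal_def, mul_inv_cancel_left₀ (ENNReal.toReal_ne_zero.mpr ⟨hA0, hA⟩)]

open scoped Classical in
theorem log_iota (T₀ : Set T) (f : T → ℝ) :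
    (fun t => Real.log (iota μ T₀ f t)) =
      T₀.piecewise (fun t => Real.log (f t)) (fun _ => Sm μ T₀ f) := by
  ext t
  by_cases ht : t ∈ T₀ <;> simp [iota, ht]

theorem integrableOn_of_integrableOn_sq [IsFiniteMeasure μ] {A : Set T} {g : T → ℝ}
    (hg : AEStronglyMeasurable g (μ.restrict A)) (hg2 : IntegrableOn (fun t => g t ^ 2) A μ) :
    IntegrableOn g A μ :=
  ((memLp_two_iff_integrable_sq hg).mpr hg2).integrable one_le_two

theorem Sm_univ_iota [IsFiniteMeasure μ] [NeZero μ] {T₀ : Set T} (hT₀ : MeasurableSet T₀)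
    {f : T → ℝ} (hf : IntegrableOn (fun t => Real.log (f t)) T₀ μ) :
    Sm μ Set.univ (iota μ T₀ f) = Sm μ T₀ f := by
  classical
  have hint : ∫ t, Real.log (iota μ T₀ f t) ∂μ = μ.real Set.univ * Sm μ T₀ f := by
    rw [log_iota, integral_piecewise hT₀ hf (integrableOn_const (measure_ne_top _ _)),
      ← measureReal_mul_Sm (measure_ne_top _ _), setIntegral_const, smul_eq_mul, ← add_mul,
      measureReal_add_measureReal_compl hT₀]
  rw [Sm, Measure.restrict_univ, hint, ← measureReal_def,
    inv_mul_cancel_left₀ measureReal_univ_ne_zero]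

end

theorem iota_preserves_norm_general
    {T : Type*} [MeasurableSpace T] (μ : Measure T)
    (hμ0 : 0 < μ Set.univ) (hμfin : μ Set.univ < ⊤)
    (T₀ : Set T) (hT₀meas : MeasurableSet T₀)
    (ft : T → ℝ) (hft : Measurable ft)
    (hftsq : IntegrableOn (fun t => (Real.log (ft t)) ^ 2) T₀ μ) :
    ∫ t, (Real.log (iota μ T₀ ft t) - Sm μ Set.univ (iota μ T₀ ft)) ^ 2 ∂μ =
      ∫ t in T₀, (Real.log (ft t) - Sm μ T₀ ft) ^ 2 ∂μ := by
  have : IsFiniteMeasure μ := ⟨hμfin⟩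
  have : NeZero μ := ⟨Measure.measure_univ_pos.mp hμ0⟩
  have hlog : IntegrableOn (fun t => Real.log (ft t)) T₀ μ :=
    integrableOn_of_integrableOn_sq (Real.measurable_log.comp hft).aestronglyMeasurable hftsq
  have hcentred : (fun t => (Real.log (iota μ T₀ ft t) - Sm μ T₀ ft) ^ 2) =
      T₀.indicator (fun t => (Real.log (ft t) - Sm μ T₀ ft) ^ 2) := by
    ext t
    by_cases ht : t ∈ T₀ <;> simp [iota, ht]
  rw [Sm_univ_iota hT₀meas hlog, hcentred, integral_indicator hT₀meas]

/-- The embedding `ι : B²(T₀) ↪ B²(T)` preserves the Bayes Hilbert space norm: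
`∫_T (log ι(f̃) − S_{μ,T}(ι(f̃)))² dμ = ∫_{T₀} (log f̃ − S_{μ,T₀}(f̃))² dμ`. -/
theorem iota_preserves_norm
    {T : Type*} [MeasurableSpace T] (μ : Measure T)
    (hμ0 : 0 < μ Set.univ) (hμfin : μ Set.univ < ⊤)
    (T₀ : Set T) (hT₀meas : MeasurableSet T₀) (hT₀pos : 0 < μ T₀)
    (ft : T → ℝ) (hft : Measurable ft) (hftpos : ∀ t ∈ T₀, 0 < ft t)
    (hftsq : IntegrableOn (fun t => (Real.log (ft t)) ^ 2) T₀ μ) :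
    ∫ t, (Real.log (iota μ T₀ ft t) - Sm μ Set.univ (iota μ T₀ ft)) ^ 2 ∂μ =
      ∫ t in T₀, (Real.log (ft t) - Sm μ T₀ ft) ^ 2 ∂μ :=
  iota_preserves_norm_general μ hμ0 hμfin T₀ hT₀meas ft hft hftsq
end

section
/- Let (T, 𝒜, μ) be a finite measure space with 0 < μ(T) < ∞ and T₀ ∈ 𝒜 with μ(T₀) > 0. For positive measurable f, g : T → ℝ with ∫_T (log f)^2 dμ < ∞ and ∫_T (log g)^2 dμ < ∞, let P(f) : T → ℝ be the function equal to f on T₀ and equal to exp(S_{μ,T₀}(f)) on T ∖ T₀ (the orthogonal projection of f onto the embedded subspace B²(T₀)). Then P is self-adjoint with respect to the Bayes inner product: ∫_T (log P(f) − S_{μ,T}(P(f))) · (log g − S_{μ,T}(g)) dμ = ∫_T (log f − S_{μ,T}(f)) · (log P(g) − S_{μ,T}(P(g))) dμ, and both sides equal ∫_{T₀} (log f − S_{μ,T₀}(f)) · (log g − S_{μ,T₀}(g)) dμ. -/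
open MeasureTheory

open scoped Classical in
/-- The orthogonal projection onto the embedded subspace `B²(T₀)`: `P(f)` equals `f` on `T₀`
and the geometric mean `exp(S_{μ,T₀}(f))` off `T₀`. -/
noncomputable def proj {T : Type*} [MeasurableSpace T] (μ : Measure T) (T₀ : Set T)
    (f : T → ℝ) (t : T) : ℝ :=
  if t ∈ T₀ then f t else Real.exp (Sm μ T₀ f)

/-! Self-adjointness of `P` comes from two facts: `log P(f) - S_{μ,T}(P(f))` is the
`T₀`-centred logarithm of `f` extended by zero, up to an additive constant; and a centred
function is orthogonal to constants, so such constants never contribute to the integrals. -/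

/-- The centred log-ratio (clr) transform of Bayes-space theory. -/
noncomputable def clr {T : Type*} [MeasurableSpace T] (μ : Measure T) (A : Set T)
    (f : T → ℝ) (t : T) : ℝ :=
  Real.log (f t) - Sm μ A f

section

variable {T : Type*} [MeasurableSpace T] {μ : Measure T} {A T₀ : Set T} {f g : T → ℝ}

theorem integral_mul_sub_const_of_integral_eq_zero {ν : Measure T} {u v : T → ℝ}
    (hu : Integrable u ν) (huv : Integrable (fun t => u t * v t) ν)
    (hu0 : ∫ t, u t ∂ν = 0) (c : ℝ) :
    ∫ t, u t * (v t - c) ∂ν = ∫ t, u t * v t ∂ν := by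
  simp_rw [mul_sub]
  rw [integral_sub huv (hu.mul_const c), integral_mul_const, hu0, zero_mul, sub_zero]

theorem setIntegral_clr_eq_zero (hA : μ A ≠ ⊤)
    (hf : IntegrableOn (fun t => Real.log (f t)) A μ) :
    ∫ t in A, clr μ A f t ∂μ = 0 := by
  have : IsFiniteMeasure (μ.restrict A) := isFiniteMeasure_restrict.2 hA
  rcases eq_or_ne (μ A) 0 with hA0 | hA0
  · simp [Measure.restrict_eq_zero.2 hA0]
  · have hAreal : (μ A).toReal ≠ 0 := ENNReal.toReal_ne_zero.2 ⟨hA0, hA⟩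
    unfold clr
    rw [integral_sub hf (integrable_const _), integral_const, smul_eq_mul,
      measureReal_restrict_apply_univ, measureReal_def, Sm, mul_inv_cancel_left₀ hAreal,
      sub_self]

theorem log_proj (t : T) :
    Real.log (proj μ T₀ f t) = T₀.indicator (clr μ T₀ f) t + Sm μ T₀ f := by
  by_cases ht : t ∈ T₀ <;> simp [proj, clr, ht]

theorem memLp_clr [IsFiniteMeasure μ] (hf : MemLp (fun t => Real.log (f t)) 2 μ) :
    MemLp (clr μ A f) 2 μ :=
  hf.sub (memLp_const _)

theorem integral_clr_proj_mul [IsFiniteMeasure μ] (hT₀ : MeasurableSet T₀)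
    (hf : MemLp (fun t => Real.log (f t)) 2 μ) {w : T → ℝ} (hw : MemLp w 2 μ)
    (hw0 : ∫ t, w t ∂μ = 0) :
    ∫ t, clr μ Set.univ (proj μ T₀ f) t * w t ∂μ = ∫ t in T₀, clr μ T₀ f t * w t ∂μ := by
  set d := Sm μ T₀ f - Sm μ Set.univ (proj μ T₀ f)
  have hsplit : ∀ t, clr μ Set.univ (proj μ T₀ f) t * w t
      = T₀.indicator (fun t => clr μ T₀ f t * w t) t + d * w t := by
    intro t
    rw [clr, log_proj]
    by_cases ht : t ∈ T₀
    · rw [Set.indicator_of_mem ht, Set.indicator_of_mem ht]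
      ring
    · rw [Set.indicator_of_notMem ht, Set.indicator_of_notMem ht]
      ring
  have hint : Integrable (fun t => clr μ T₀ f t * w t) μ := (memLp_clr hf).integrable_mul hw
  rw [integral_congr_ae (ae_of_all _ hsplit),
    integral_add (hint.indicator hT₀) ((hw.integrable one_le_two).const_mul d),
    integral_indicator hT₀, integral_const_mul, hw0, mul_zero, add_zero]

theorem integral_clr_proj_mul_clr [IsFiniteMeasure μ] (hT₀ : MeasurableSet T₀)
    (hf : MemLp (fun t => Real.log (f t)) 2 μ) (hg : MemLp (fun t => Real.log (g t)) 2 μ) :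
    ∫ t, clr μ Set.univ (proj μ T₀ f) t * clr μ Set.univ g t ∂μ
      = ∫ t in T₀, clr μ T₀ f t * clr μ T₀ g t ∂μ := by
  have hg0 : ∫ t, clr μ Set.univ g t ∂μ = 0 := by
    simpa using setIntegral_clr_eq_zero (A := Set.univ) (measure_ne_top μ _)
      (hg.integrable one_le_two).integrableOn
  have hshift : ∀ t, clr μ Set.univ g t = clr μ T₀ g t - (Sm μ Set.univ g - Sm μ T₀ g) := by
    intro t
    simp only [clr]
    ring
  rw [integral_clr_proj_mul hT₀ hf (memLp_clr hg) hg0]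
  simp_rw [hshift]
  exact integral_mul_sub_const_of_integral_eq_zero
    ((memLp_clr hf).integrable one_le_two).integrableOn
    ((memLp_clr hf).integrable_mul (memLp_clr hg)).integrableOn
    (setIntegral_clr_eq_zero (measure_ne_top μ _) (hf.integrable one_le_two).integrableOn) _

end

theorem proj_selfAdjoint_general
    {T : Type*} [MeasurableSpace T] (μ : Measure T)
    (hμfin : μ Set.univ < ⊤)
    (T₀ : Set T) (hT₀meas : MeasurableSet T₀)
    (f g : T → ℝ) (hf : Measurable f) (hg : Measurable g)
    (hfsq : Integrable (fun t => (Real.log (f t)) ^ 2) μ)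
    (hgsq : Integrable (fun t => (Real.log (g t)) ^ 2) μ) :
    (∫ t, (Real.log (proj μ T₀ f t) - Sm μ Set.univ (proj μ T₀ f)) *
          (Real.log (g t) - Sm μ Set.univ g) ∂μ =
        ∫ t, (Real.log (f t) - Sm μ Set.univ f) *
          (Real.log (proj μ T₀ g t) - Sm μ Set.univ (proj μ T₀ g)) ∂μ) ∧
      (∫ t, (Real.log (proj μ T₀ f t) - Sm μ Set.univ (proj μ T₀ f)) *
          (Real.log (g t) - Sm μ Set.univ g) ∂μ =
        ∫ t in T₀, (Real.log (f t) - Sm μ T₀ f) *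
          (Real.log (g t) - Sm μ T₀ g) ∂μ) := by
  have : IsFiniteMeasure μ := ⟨hμfin⟩
  have hLf : MemLp (fun t => Real.log (f t)) 2 μ :=
    (memLp_two_iff_integrable_sq hf.log.aestronglyMeasurable).2 hfsq
  have hLg : MemLp (fun t => Real.log (g t)) 2 μ :=
    (memLp_two_iff_integrable_sq hg.log.aestronglyMeasurable).2 hgsq
  have hfg := integral_clr_proj_mul_clr hT₀meas hLf hLg
  have hgf : ∫ t, clr μ Set.univ f t * clr μ Set.univ (proj μ T₀ g) t ∂μ
      = ∫ t in T₀, clr μ T₀ f t * clr μ T₀ g t ∂μ := by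
    simp_rw [mul_comm (clr μ Set.univ f _), mul_comm (clr μ T₀ f _)]
    exact integral_clr_proj_mul_clr hT₀meas hLg hLf
  exact ⟨hfg.trans hgf.symm, hfg⟩

/-- The orthogonal projection `P` onto `B²(T₀)` is self-adjoint w.r.t. the Bayes inner product:
`⟨P(f), g⟩_{B²(T)} = ⟨f, P(g)⟩_{B²(T)}`, and both sides equal
`∫_{T₀} (log f − S_{μ,T₀}(f)) (log g − S_{μ,T₀}(g)) dμ`. -/
theorem proj_selfAdjoint
    {T : Type*} [MeasurableSpace T] (μ : Measure T)
    (hμ0 : 0 < μ Set.univ) (hμfin : μ Set.univ < ⊤)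
    (T₀ : Set T) (hT₀meas : MeasurableSet T₀) (hT₀pos : 0 < μ T₀)
    (f g : T → ℝ) (hf : Measurable f) (hg : Measurable g)
    (hfpos : ∀ t, 0 < f t) (hgpos : ∀ t, 0 < g t)
    (hfsq : Integrable (fun t => (Real.log (f t)) ^ 2) μ)
    (hgsq : Integrable (fun t => (Real.log (g t)) ^ 2) μ) :
    (∫ t, (Real.log (proj μ T₀ f t) - Sm μ Set.univ (proj μ T₀ f)) *
          (Real.log (g t) - Sm μ Set.univ g) ∂μ =
        ∫ t, (Real.log (f t) - Sm μ Set.univ f) *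
          (Real.log (proj μ T₀ g t) - Sm μ Set.univ (proj μ T₀ g)) ∂μ) ∧
      (∫ t, (Real.log (proj μ T₀ f t) - Sm μ Set.univ (proj μ T₀ f)) *
          (Real.log (g t) - Sm μ Set.univ g) ∂μ =
        ∫ t in T₀, (Real.log (f t) - Sm μ T₀ f) *
          (Real.log (g t) - Sm μ T₀ g) ∂μ) :=
  proj_selfAdjoint_general μ hμfin T₀ hT₀meas f g hf hg hfsq hgsq
end

section
/- In the mixed-measure setting, let f̃_c : C → ℝ be measurable and λ-square-integrable with ∫_C f̃_c dλ = 0, and let f̃_d : D• → ℝ satisfy Σ_{d=1}^{D+1} w_d f̃_d(t_d) = 0. Define ι̃_c(f̃_c) : I → ℝ to equal f̃_c on C and 0 on D, and ι̃_d(f̃_d) : I → ℝ to equal f̃_d(t_{D+1}) on C and f̃_d(t_d) at each t_d ∈ D. Then ι̃_c(f̃_c) and ι̃_d(f̃_d) both have μ-integral zero, and they are orthogonal in L²(μ): ∫_I ι̃_c(f̃_c) · ι̃_d(f̃_d) dμ = 0. -/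
open MeasureTheory
open scoped Classical ENNReal

/-- The mixed reference measure `μ = Σ_d w_d δ_{t_d} + λ`, where `λ` is Lebesgue measure
restricted to `I`. -/
noncomputable def mixedMeasure (I : Set ℝ) (n : ℕ) (t : Fin n → ℝ) (w : Fin n → ℝ) :
    Measure ℝ :=
  (∑ d, ENNReal.ofReal (w d) • Measure.dirac (t d)) + volume.restrict I

/-! The atoms are Lebesgue-null, so against `μ` a function integrates as its atom values weighted
by `w` plus the Lebesgue integral over `I` of anything agreeing with it off the atoms. For `ι̃_c`
the atom values vanish and the Lebesgue part is `∫_C f̃_c = 0`; for `ι̃_d` the total is exactly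
`Σ w_d f̃_d(t_d) + λ(I) f̃_d(t_{D+1}) = 0`. Since `ι̃_c` vanishes on the atoms and `ι̃_d` is
constant off them, `ι̃_c ι̃_d = f̃_d(t_{D+1}) ι̃_c`, so orthogonality reduces to `∫ ι̃_c dμ = 0`. -/

section FiniteDirac

variable {α ι E : Type*} [MeasurableSpace α] [MeasurableSingletonClass α] [Fintype ι]
  [NormedAddCommGroup E]

lemma integrable_finsetSum_smul_dirac (f : α → E) (x : ι → α) {c : ι → ℝ≥0∞}
    (hc : ∀ i, c i ≠ ∞) : Integrable f (∑ i, c i • Measure.dirac (x i)) :=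
  integrable_finsetSum_measure.2 fun i _ =>
    (integrable_dirac enorm_lt_top).smul_measure (hc i)

lemma integral_finsetSum_ofReal_smul_dirac [NormedSpace ℝ E] [CompleteSpace E]
    (f : α → E) (x : ι → α) {w : ι → ℝ} (hw : ∀ i, 0 ≤ w i) :
    ∫ a, f a ∂(∑ i, ENNReal.ofReal (w i) • Measure.dirac (x i)) = ∑ i, w i • f (x i) := by
  rw [integral_finsetSum_measure fun i _ =>
    (integrable_dirac enorm_lt_top).smul_measure ENNReal.ofReal_ne_top]
  refine Finset.sum_congr rfl fun i _ => ?_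
  rw [integral_smul_measure, integral_dirac, ENNReal.toReal_ofReal (hw i)]

end FiniteDirac

lemma Measure.restrict_restrict_sdiff_of_null {α : Type*} [MeasurableSpace α] {μ : Measure α}
    {s t : Set α} (ht : μ t = 0) : (μ.restrict s).restrict (s \ t) = μ.restrict s := by
  rw [Measure.restrict_restrict_of_subset Set.sdiff_subset]
  exact Measure.restrict_congr_set (sdiff_null_ae_eq_self ht)

section MixedMeasure

variable {I : Set ℝ} {n : ℕ} {t : Fin n → ℝ} {w : Fin n → ℝ}

lemma mixedMeasure_restrict_self (htI : ∀ d, t d ∈ I) :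
    (mixedMeasure I n t w).restrict I = mixedMeasure I n t w := by
  have hatoms : (∑ d, ENNReal.ofReal (w d) • Measure.dirac (t d)).restrict I =
      ∑ d, ENNReal.ofReal (w d) • Measure.dirac (t d) := by
    rw [← Measure.restrictₗ_apply, map_sum]
    refine Finset.sum_congr rfl fun d _ => ?_
    rw [map_smul, Measure.restrictₗ_apply, restrict_dirac, if_pos (htI d)]
  rw [mixedMeasure, Measure.restrict_add, hatoms, Measure.restrict_restrict_of_subset subset_rfl]

lemma integral_mixedMeasure_of_eqOn_compl_range (hw : ∀ d, 0 ≤ w d) {f g : ℝ → ℝ}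
    (hg : IntegrableOn g I) (hfg : Set.EqOn f g (Set.range t)ᶜ) :
    ∫ x, f x ∂(mixedMeasure I n t w) = ∑ d, w d * f (t d) + ∫ x in I, g x := by
  have hnull : volume (Set.range t) = 0 := (Set.finite_range t).measure_zero volume
  have hae : f =ᵐ[volume.restrict I] g := by
    filter_upwards [ae_restrict_of_ae (measure_eq_zero_iff_ae_notMem.1 hnull)] with x hx
    exact hfg hx
  rw [mixedMeasure, integral_add_measure (integrable_finsetSum_smul_dirac f t
      fun _ => ENNReal.ofReal_ne_top) (hg.congr_fun_ae hae.symm),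
    integral_finsetSum_ofReal_smul_dirac f t hw, integral_congr_ae hae]
  simp only [smul_eq_mul]

end MixedMeasure

theorem mixed_embeddings_orthogonal_general
    (I : Set ℝ) (hIfin : volume I < ⊤)
    (n : ℕ) (t : Fin n → ℝ) (htI : ∀ d, t d ∈ I)
    (w : Fin n → ℝ) (hw : ∀ d, 0 < w d)
    (s : ℝ)
    (fc : ℝ → ℝ) (hfc : Measurable fc)
    (hfcsq : IntegrableOn (fun x => (fc x) ^ 2) (I \ Set.range t) (volume.restrict I))
    (hfc0 : ∫ x in I \ Set.range t, fc x ∂(volume.restrict I) = 0)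
    (fd : ℝ → ℝ)
    (hfd0 : ∑ d, w d * fd (t d) + (volume I).toReal * fd s = 0) :
    (∫ x, (if x ∈ Set.range t then 0 else fc x) ∂(mixedMeasure I n t w) = 0) ∧
      (∫ x, (if x ∈ Set.range t then fd x else fd s) ∂(mixedMeasure I n t w) = 0) ∧
      (∫ x in I, (if x ∈ Set.range t then 0 else fc x) *
          (if x ∈ Set.range t then fd x else fd s) ∂(mixedMeasure I n t w) = 0) := by
  have hw_nonneg : ∀ d, 0 ≤ w d := fun d => (hw d).le
  have hrestrict := Measure.restrict_restrict_sdiff_of_null (s := I)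
    ((Set.finite_range t).measure_zero volume)
  rw [IntegrableOn, hrestrict] at hfcsq
  rw [hrestrict] at hfc0
  have : IsFiniteMeasure (volume.restrict I) := isFiniteMeasure_restrict.2 hIfin.ne
  have hfc_int : IntegrableOn fc I :=
    ((memLp_two_iff_integrable_sq hfc.aestronglyMeasurable).2 hfcsq).integrable one_le_two
  have hc : ∫ x, (if x ∈ Set.range t then 0 else fc x) ∂(mixedMeasure I n t w) = 0 := by
    rw [integral_mixedMeasure_of_eqOn_compl_range hw_nonneg hfc_int fun x hx => if_neg hx, hfc0]
    simp
  refine ⟨hc, ?_, ?_⟩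
  · rw [integral_mixedMeasure_of_eqOn_compl_range hw_nonneg (integrableOn_const hIfin.ne)
      fun x hx => if_neg hx, setIntegral_const, measureReal_def, smul_eq_mul, ← hfd0]
    simp
  · have hprod : ∀ x, (if x ∈ Set.range t then (0 : ℝ) else fc x) *
        (if x ∈ Set.range t then fd x else fd s) =
        fd s * if x ∈ Set.range t then 0 else fc x := fun x => by
      split_ifs <;> ring
    simp_rw [hprod, integral_const_mul, mixedMeasure_restrict_self htI, hc, mul_zero]

/-- In the mixed-measure setting, the continuous embedding `ι̃_c(f̃_c)` (equal to `f̃_c` on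
`C = I ∖ D` and `0` on `D`) and the discrete embedding `ι̃_d(f̃_d)` (equal to `f̃_d(t_{D+1})` on
`C` and `f̃_d(t_d)` at each atom) of zero-mean components both have `μ`-integral zero and are
orthogonal in `L²(μ)`. -/
theorem mixed_embeddings_orthogonal
    (I : Set ℝ) (hImeas : MeasurableSet I) (hIconn : I.OrdConnected)
    (hI0 : 0 < volume I) (hIfin : volume I < ⊤)
    (n : ℕ) (t : Fin n → ℝ) (htinj : Function.Injective t) (htI : ∀ d, t d ∈ I)
    (w : Fin n → ℝ) (hw : ∀ d, 0 < w d)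
    (s : ℝ) (hs : s ∉ Set.range t)
    (fc : ℝ → ℝ) (hfc : Measurable fc)
    (hfcsq : IntegrableOn (fun x => (fc x) ^ 2) (I \ Set.range t) (volume.restrict I))
    (hfc0 : ∫ x in I \ Set.range t, fc x ∂(volume.restrict I) = 0)
    (fd : ℝ → ℝ)
    (hfd0 : ∑ d, w d * fd (t d) + (volume I).toReal * fd s = 0) :
    (∫ x, (if x ∈ Set.range t then 0 else fc x) ∂(mixedMeasure I n t w) = 0) ∧
      (∫ x, (if x ∈ Set.range t then fd x else fd s) ∂(mixedMeasure I n t w) = 0) ∧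
      (∫ x in I, (if x ∈ Set.range t then 0 else fc x) *
          (if x ∈ Set.range t then fd x else fd s) ∂(mixedMeasure I n t w) = 0) :=
  mixed_embeddings_orthogonal_general I hIfin n t htI w hw s fc hfc hfcsq hfc0 fd hfd0
end

section
/- In the mixed-measure setting, let f̃ : I → ℝ be measurable and μ-square-integrable with ∫_I f̃ dμ = 0. Define f̃_c : C → ℝ by f̃_c(t) = f̃(t) − (1/λ(I)) ∫_C f̃ dλ, and f̃_d : D• → ℝ by f̃_d(t_d) = f̃(t_d) for d = 1, …, D and f̃_d(t_{D+1}) = (1/λ(I)) ∫_C f̃ dλ. Then: (i) ∫_C f̃_c dλ = 0; (ii) Σ_{d=1}^{D+1} w_d f̃_d(t_d) = 0; and (iii) f̃(t) = ι̃_c(f̃_c)(t) + ι̃_d(f̃_d)(t) for every t ∈ I, where ι̃_c(f̃_c) equals f̃_c on C and 0 on D, and ι̃_d(f̃_d) equals f̃_d(t_{D+1}) on C and f̃_d(t_d) at each t_d ∈ D. Hence every element of L²₀(μ) decomposes into a continuous component in L²₀(λ) and a discrete component in L²₀(δ•). -/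
/-!
Since `D` is Lebesgue-null, `∫_C` over `λ` is `∫_I`, so `c` is the `λ`-average of `f̃` on `I`.
Then (i) is `∫ (f̃ - ⨍ f̃) dλ = 0`, and (ii) is
`0 = ∫ f̃ dμ = Σ_d w_d f̃(t_d) + λ(I) ⨍ f̃ dλ`, which needs `f̃ ∈ L¹(λ)`:
on the finite measure `λ` this follows from `f̃ ∈ L²`.
-/

open MeasureTheory
open scoped Classical

namespace MeasureTheory

variable {α E ι : Type*} [MeasurableSpace α] [NormedAddCommGroup E] [NormedSpace ℝ E]

theorem Measure.restrict_restrict_diff_of_measure_zero {μ : Measure α} {s t : Set α}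
    (ht : μ t = 0) : (μ.restrict s).restrict (s \ t) = μ.restrict s := by
  rw [Measure.restrict_restrict_of_subset Set.sdiff_subset]
  exact Measure.restrict_congr_set (sdiff_null_ae_eq_self ht)

theorem integral_sum_smul_dirac_add [CompleteSpace E] [MeasurableSingletonClass α] [Fintype ι]
    {ν : Measure α} {f : α → E} (hf : Integrable f ν) (t : ι → α) {w : ι → ℝ}
    (hw : ∀ i, 0 ≤ w i) :
    ∫ x, f x ∂((∑ i, ENNReal.ofReal (w i) • Measure.dirac (t i)) + ν) =
      ∑ i, w i • f (t i) + ∫ x, f x ∂ν := by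
  have hdirac : ∀ i, Integrable f (ENNReal.ofReal (w i) • Measure.dirac (t i)) := fun i =>
    (integrable_dirac enorm_lt_top).smul_measure ENNReal.ofReal_ne_top
  rw [integral_add_measure (integrable_finsetSum_measure.2 fun i _ => hdirac i) hf,
    integral_finsetSum_measure fun i _ => hdirac i]
  simp only [integral_smul_measure, integral_dirac, ENNReal.toReal_ofReal (hw _)]

end MeasureTheory

theorem mixed_L2_decomposition_general
    (I : Set ℝ)
    (hIfin : volume I < ⊤)
    (n : ℕ) (t : Fin n → ℝ)
    (w : Fin n → ℝ) (hw : ∀ d, 0 < w d)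
    (ft : ℝ → ℝ) (hft : Measurable ft)
    (hsq : Integrable (fun x => (ft x) ^ 2) (mixedMeasure I n t w))
    (hzero : ∫ x, ft x ∂(mixedMeasure I n t w) = 0)
    (c : ℝ)
    (hc : c = (volume I).toReal⁻¹ * ∫ x in I \ Set.range t, ft x ∂(volume.restrict I)) :
    (∫ x in I \ Set.range t, (ft x - c) ∂(volume.restrict I) = 0) ∧
      (∑ d, w d * ft (t d) + (volume I).toReal * c = 0) ∧
      (∀ x ∈ I, ft x = (if x ∈ Set.range t then 0 else ft x - c) +
        (if x ∈ Set.range t then ft x else c)) := by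
  have : IsFiniteMeasure (volume.restrict I) := isFiniteMeasure_restrict.2 hIfin.ne
  have hres : (volume.restrict I).restrict (I \ Set.range t) = volume.restrict I :=
    Measure.restrict_restrict_diff_of_measure_zero ((Set.finite_range t).measure_zero _)
  have hc_avg : c = ⨍ x, ft x ∂(volume.restrict I) := by
    rw [hc, hres, average_eq, measureReal_restrict_apply_univ, smul_eq_mul, measureReal_def]
  have hint : Integrable ft (volume.restrict I) :=
    ((memLp_two_iff_integrable_sq hft.aestronglyMeasurable).2
      (hsq.mono_measure (Measure.le_add_left le_rfl))).integrable one_le_two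
  refine ⟨?_, ?_, fun x _ => by split_ifs <;> ring⟩
  · rw [hres, hc_avg]
    exact integral_sub_average _ ft
  · rw [mixedMeasure, integral_sum_smul_dirac_add hint t fun d => (hw d).le] at hzero
    rwa [hc_avg, ← measureReal_def, ← measureReal_restrict_apply_univ, ← smul_eq_mul,
      measure_smul_average]

/-- In the mixed-measure setting, every `f̃ ∈ L²₀(μ)` decomposes into a continuous component
`f̃_c = f̃ − c` on `C = I ∖ D` (with `c = (1/λ(I)) ∫_C f̃ dλ`) lying in `L²₀(λ)` and a discrete
component `f̃_d` (with `f̃_d(t_d) = f̃(t_d)` and `f̃_d(t_{D+1}) = c`) lying in `L²₀(δ•)`: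
(i) `∫_C f̃_c dλ = 0`; (ii) `Σ_d w_d f̃_d(t_d) + λ(I) c = 0`; and
(iii) `f̃ = ι̃_c(f̃_c) + ι̃_d(f̃_d)` on `I`. -/
theorem mixed_L2_decomposition
    (I : Set ℝ) (hImeas : MeasurableSet I) (hIconn : I.OrdConnected)
    (hI0 : 0 < volume I) (hIfin : volume I < ⊤)
    (n : ℕ) (t : Fin n → ℝ) (htinj : Function.Injective t) (htI : ∀ d, t d ∈ I)
    (w : Fin n → ℝ) (hw : ∀ d, 0 < w d)
    (ft : ℝ → ℝ) (hft : Measurable ft)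
    (hsq : Integrable (fun x => (ft x) ^ 2) (mixedMeasure I n t w))
    (hzero : ∫ x, ft x ∂(mixedMeasure I n t w) = 0)
    (c : ℝ)
    (hc : c = (volume I).toReal⁻¹ * ∫ x in I \ Set.range t, ft x ∂(volume.restrict I)) :
    (∫ x in I \ Set.range t, (ft x - c) ∂(volume.restrict I) = 0) ∧
      (∑ d, w d * ft (t d) + (volume I).toReal * c = 0) ∧
      (∀ x ∈ I, ft x = (if x ∈ Set.range t then 0 else ft x - c) +
        (if x ∈ Set.range t then ft x else c)) :=
  mixed_L2_decomposition_general I hIfin n t w hw ft hft hsq hzero c hc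
end

section
/- In the mixed-measure setting, let f_c : C → ℝ be measurable with f_c > 0 and log f_c λ-integrable, and define the continuous embedding ι_c(f_c) : I → ℝ by ι_c(f_c)(t) = f_c(t) for t ∈ C and ι_c(f_c)(t) = exp(S_λ(f_c)) for t ∈ D, where S_λ(f_c) = (1/λ(I)) ∫_C log f_c dλ. Then (1/μ(I)) ∫_I log ι_c(f_c) dμ = S_λ(f_c), and consequently the centered log-ratio transform with respect to μ satisfies clr_μ[ι_c(f_c)](t) = log f_c(t) − S_λ(f_c) for t ∈ C and clr_μ[ι_c(f_c)](t) = 0 for t ∈ D; that is, the clr transform commutes with the continuous embedding. -/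
open MeasureTheory
open scoped Classical

/-!
On `I` the measure `μ` is its atomic part plus `λ`. The function `log ι_c(f_c)` agrees
`λ`-a.e. with `log f_c` (the atoms form a `λ`-null set), so its `λ`-mean is `S_λ(f_c)`, and it
takes the constant value `S_λ(f_c)` at every atom. Adding mass where a function equals its mean
does not change the mean, hence the `μ`-mean is `S_λ(f_c)` as well.
-/

open Set

namespace MeasureTheory

variable {X : Type*} [MeasurableSpace X]

theorem ae_mem_range_sum_smul_dirac [MeasurableSingletonClass X] {ι : Type*} [Fintype ι]
    (a : ι → ENNReal) (t : ι → X) :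
    ∀ᵐ x ∂(∑ i, a i • Measure.dirac (t i)), x ∈ range t := by
  simp [ae_iff, Measure.finsetSum_apply, Measure.dirac_apply]

theorem Measure.restrict_restrict_sdiff_null {μ : Measure X} {s N : Set X} (hN : μ N = 0) :
    (μ.restrict s).restrict (s \ N) = μ.restrict s := by
  rw [Measure.restrict_restrict_of_subset sdiff_subset,
    Measure.restrict_congr_set (sdiff_null_ae_eq_self hN)]

theorem average_add_measure_of_ae_eq_const {α β : Measure X} [IsFiniteMeasure α]
    [IsFiniteMeasure β] [NeZero β] {f : X → ℝ} {c : ℝ} (hfα : f =ᵐ[α] fun _ => c)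
    (hfβ : Integrable f β) (hβ : ⨍ x, f x ∂β = c) :
    ⨍ x, f x ∂(α + β) = c := by
  have hmass : (α + β).real univ ≠ 0 := by
    rw [measureReal_add_apply]
    exact (add_pos_of_nonneg_of_pos measureReal_nonneg measureReal_univ_pos).ne'
  rw [average_eq, integral_add_measure ((integrable_const c).congr hfα.symm) hfβ,
    integral_congr_ae hfα, integral_const, ← measure_smul_average β f, hβ, ← add_smul,
    ← measureReal_add_apply, smul_eq_mul, smul_eq_mul, inv_mul_cancel_left₀ hmass]

end MeasureTheory

theorem mixedMeasure_restrict {I : Set ℝ} {n : ℕ} {t : Fin n → ℝ} (htI : ∀ d, t d ∈ I)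
    (w : Fin n → ℝ) :
    (mixedMeasure I n t w).restrict I =
      (∑ d, ENNReal.ofReal (w d) • Measure.dirac (t d)) + volume.restrict I := by
  rw [mixedMeasure, Measure.restrict_add, Measure.restrict_restrict_of_subset subset_rfl,
    Measure.restrict_eq_self_of_ae_mem]
  exact (ae_mem_range_sum_smul_dirac _ t).mono fun x ⟨d, hd⟩ => hd ▸ htI d

theorem clr_commutes_with_continuous_embedding_general
    (I : Set ℝ)
    (hI0 : 0 < volume I) (hIfin : volume I < ⊤)
    (n : ℕ) (t : Fin n → ℝ) (htI : ∀ d, t d ∈ I)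
    (w : Fin n → ℝ)
    (fc : ℝ → ℝ)
    (hfclog : IntegrableOn (fun x => Real.log (fc x)) (I \ Set.range t) (volume.restrict I))
    (Slam : ℝ)
    (hSlam : Slam = (volume I).toReal⁻¹ *
      ∫ x in I \ Set.range t, Real.log (fc x) ∂(volume.restrict I))
    (g : ℝ → ℝ) (hg : g = fun x => if x ∈ Set.range t then Real.exp Slam else fc x) :
    ((mixedMeasure I n t w) I).toReal⁻¹ *
        (∫ x in I, Real.log (g x) ∂(mixedMeasure I n t w)) = Slam ∧
      (∀ x ∈ I \ Set.range t,
        Real.log (g x) - ((mixedMeasure I n t w) I).toReal⁻¹ *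
            (∫ y in I, Real.log (g y) ∂(mixedMeasure I n t w)) =
          Real.log (fc x) - Slam) ∧
      (∀ d : Fin n,
        Real.log (g (t d)) - ((mixedMeasure I n t w) I).toReal⁻¹ *
            (∫ y in I, Real.log (g y) ∂(mixedMeasure I n t w)) = 0) := by
  have hgD : ∀ d, Real.log (g (t d)) = Slam := by simp [hg]
  have hgC : ∀ x ∉ range t, g x = fc x := fun x hx => hg ▸ if_neg hx
  have hD : volume (range t) = 0 := (finite_range t).measure_zero _
  have : IsFiniteMeasure (volume.restrict I) := isFiniteMeasure_restrict.2 hIfin.ne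
  have : NeZero (volume.restrict I) := ⟨Measure.restrict_eq_zero.not.2 hI0.ne'⟩
  have : ∀ d, IsFiniteMeasure (ENNReal.ofReal (w d) • Measure.dirac (t d)) :=
    fun d => (Measure.dirac _).smul_finite ENNReal.ofReal_ne_top
  have hC : (fun x => Real.log (g x)) =ᵐ[volume.restrict I] fun x => Real.log (fc x) :=
    (ae_restrict_of_ae (measure_eq_zero_iff_ae_notMem.1 hD)).mono fun x hx =>
      congrArg Real.log (hgC x hx)
  rw [IntegrableOn, Measure.restrict_restrict_sdiff_null hD] at hfclog
  rw [Measure.restrict_restrict_sdiff_null hD, ← measureReal_def, ← smul_eq_mul,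
    ← setAverage_eq] at hSlam
  have hmean : (mixedMeasure I n t w I).toReal⁻¹ *
      ∫ x in I, Real.log (g x) ∂mixedMeasure I n t w = Slam := by
    rw [← measureReal_def, ← smul_eq_mul, ← setAverage_eq, mixedMeasure_restrict htI]
    exact average_add_measure_of_ae_eq_const
      ((ae_mem_range_sum_smul_dirac _ t).mono fun x ⟨d, hd⟩ => hd ▸ hgD d)
      (hfclog.congr hC.symm) ((average_congr hC).trans hSlam.symm)
  exact ⟨hmean, fun x hx => by rw [hmean, hgC x hx.2], fun d => by rw [hmean, hgD d, sub_self]⟩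

/-- In the mixed-measure setting, the clr transform commutes with the continuous embedding
`ι_c(f_c)` (equal to `f_c` on `C = I ∖ D` and to the geometric mean `exp(S_λ(f_c))` on `D`):
`(1/μ(I)) ∫_I log ι_c(f_c) dμ = S_λ(f_c)`, hence `clr_μ[ι_c(f_c)] = log f_c − S_λ(f_c)` on `C`
and `clr_μ[ι_c(f_c)] = 0` on `D`. -/
theorem clr_commutes_with_continuous_embedding
    (I : Set ℝ) (hImeas : MeasurableSet I) (hIconn : I.OrdConnected)
    (hI0 : 0 < volume I) (hIfin : volume I < ⊤)
    (n : ℕ) (t : Fin n → ℝ) (htinj : Function.Injective t) (htI : ∀ d, t d ∈ I)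
    (w : Fin n → ℝ) (hw : ∀ d, 0 < w d)
    (fc : ℝ → ℝ) (hfc : Measurable fc)
    (hfcpos : ∀ x ∈ I \ Set.range t, 0 < fc x)
    (hfclog : IntegrableOn (fun x => Real.log (fc x)) (I \ Set.range t) (volume.restrict I))
    (Slam : ℝ)
    (hSlam : Slam = (volume I).toReal⁻¹ *
      ∫ x in I \ Set.range t, Real.log (fc x) ∂(volume.restrict I))
    (g : ℝ → ℝ) (hg : g = fun x => if x ∈ Set.range t then Real.exp Slam else fc x) :
    ((mixedMeasure I n t w) I).toReal⁻¹ *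
        (∫ x in I, Real.log (g x) ∂(mixedMeasure I n t w)) = Slam ∧
      (∀ x ∈ I \ Set.range t,
        Real.log (g x) - ((mixedMeasure I n t w) I).toReal⁻¹ *
            (∫ y in I, Real.log (g y) ∂(mixedMeasure I n t w)) =
          Real.log (fc x) - Slam) ∧
      (∀ d : Fin n,
        Real.log (g (t d)) - ((mixedMeasure I n t w) I).toReal⁻¹ *
            (∫ y in I, Real.log (g y) ∂(mixedMeasure I n t w)) = 0) :=
  clr_commutes_with_continuous_embedding_general I hI0 hIfin n t htI w fc hfclog Slam hSlam g hg
end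

section
/- In the mixed-measure setting, let h : I → ℝ be nonnegative, measurable and λ-integrable, fix d₀ ∈ {1, …, D}, and let (A_n) be a decreasing sequence of intervals with A_n ⊆ I, t_{d₀} ∈ A_n for all n, and ⋂_n A_n = {t_{d₀}}. Then the ratio (∫_{A_n} h dμ) / μ(A_n) converges to h(t_{d₀}) as n → ∞. In particular, at an atom of the mixed reference measure, the density value h(t_{d₀}) is the limit of probability-to-measure ratios of shrinking neighborhoods. -/
/-! Once `A m` is so small that it contains no atom other than `t d₀`, the measure `μ` restricted
to `A m` is `w d₀ δ_{t d₀} + λ|_{A m}`, so the ratio equals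
`(w d₀ h(t d₀) + ∫_{A m} h dλ) / (w d₀ + λ(A m))`. Both Lebesgue terms vanish in the limit because
`A m` decreases to a `λ`-null singleton, leaving `h(t d₀)`. -/

open MeasureTheory
open scoped Classical

open Filter Topology

section ShrinkingToPoint

variable {α : Type*} {A : ℕ → Set α} {a : α}

theorem Antitone.eventually_notMem_of_iInter_eq_singleton (hA : Antitone A)
    (hcap : ⋂ m, A m = {a}) {b : α} (hb : b ≠ a) : ∀ᶠ m in atTop, b ∉ A m := by
  have hb' : b ∉ ⋂ m, A m := by rwa [hcap]
  obtain ⟨M, hM⟩ : ∃ M, b ∉ A M := by simpa using hb'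
  exact eventually_atTop.2 ⟨M, fun m hm hbm => hM (hA hm hbm)⟩

variable [MeasurableSpace α] {ρ : Measure α} [NullSingletonClass ρ]

theorem tendsto_measureReal_of_antitone_iInter_eq_singleton (hAm : ∀ m, MeasurableSet (A m))
    (hA : Antitone A) (hcap : ⋂ m, A m = {a}) (hfin : ρ (A 0) ≠ ⊤) :
    Tendsto (fun m => ρ.real (A m)) atTop (𝓝 0) := by
  have := tendsto_measure_iInter_atTop (fun m => (hAm m).nullMeasurableSet) hA ⟨0, hfin⟩
  rw [hcap, measure_singleton] at this
  exact (ENNReal.tendsto_toReal_zero_iff fun m =>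
    measure_ne_top_of_subset (hA m.zero_le) hfin).2 this

theorem tendsto_setIntegral_of_antitone_iInter_eq_singleton {E : Type*} [NormedAddCommGroup E]
    [NormedSpace ℝ E] [CompleteSpace E] {f : α → E} (hAm : ∀ m, MeasurableSet (A m))
    (hA : Antitone A) (hcap : ⋂ m, A m = {a}) (hf : IntegrableOn f (A 0) ρ) :
    Tendsto (fun m => ∫ x in A m, f x ∂ρ) atTop (𝓝 0) := by
  simpa [hcap] using tendsto_setIntegral_of_antitone hAm hA ⟨0, hf⟩

end ShrinkingToPoint

section AtomPlusDiffuse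

variable {α : Type*} [MeasurableSpace α] {a : α} {s : Set α}

theorem Measure.restrict_sum_smul_dirac_of_forall_ne {ι : Type*} [Fintype ι] (c : ι → ENNReal)
    (x : ι → α) (hs : MeasurableSet s) {i₀ : ι} (hi₀ : x i₀ ∈ s)
    (hother : ∀ i ≠ i₀, x i ∉ s) :
    (∑ i, c i • Measure.dirac (x i)).restrict s = c i₀ • Measure.dirac (x i₀) := by
  rw [← Measure.restrictₗ_apply, map_sum, Finset.sum_eq_single i₀]
  · rw [Measure.restrictₗ_apply, Measure.restrict_smul, restrict_dirac' hs, if_pos hi₀]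
  · intro i _ hi
    rw [Measure.restrictₗ_apply, Measure.restrict_smul, restrict_dirac' hs, if_neg (hother i hi),
      smul_zero]
  · exact fun h => (h (Finset.mem_univ i₀)).elim

variable [MeasurableSingletonClass α] {ν ρ : Measure α} {c : ENNReal}

theorem integral_smul_dirac_add {E : Type*} [NormedAddCommGroup E] [NormedSpace ℝ E]
    [CompleteSpace E] {f : α → E} (hc : c ≠ ⊤) (hf : Integrable f ρ) :
    ∫ x, f x ∂(c • Measure.dirac a + ρ) = c.toReal • f a + ∫ x, f x ∂ρ := by
  rw [integral_add_measure ((integrable_dirac enorm_lt_top).smul_measure hc) hf,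
    integral_smul_measure, integral_dirac]

theorem setIntegral_div_measureReal_eq_of_restrict_eq {f : α → ℝ} (hc : c ≠ ⊤)
    (hρs : ρ s ≠ ⊤) (hν : ν.restrict s = c • Measure.dirac a + ρ.restrict s)
    (hf : IntegrableOn f s ρ) :
    (∫ x in s, f x ∂ν) / ν.real s =
      (c.toReal * f a + ∫ x in s, f x ∂ρ) / (c.toReal + ρ.real s) := by
  have hνs : ν s = c + ρ s := by
    rw [← Measure.restrict_apply_univ, hν]
    simp
  rw [hν, integral_smul_dirac_add hc hf, smul_eq_mul, measureReal_def, hνs,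
    ENNReal.toReal_add hc hρs, measureReal_def]

end AtomPlusDiffuse

theorem mixedMeasure_restrict_eq {I S : Set ℝ} {n : ℕ} {t w : Fin n → ℝ} {d₀ : Fin n}
    (hS : MeasurableSet S) (hSI : S ⊆ I) (hd₀ : t d₀ ∈ S) (hother : ∀ d ≠ d₀, t d ∉ S) :
    (mixedMeasure I n t w).restrict S =
      ENNReal.ofReal (w d₀) • Measure.dirac (t d₀) + volume.restrict S := by
  rw [mixedMeasure, Measure.restrict_add,
    Measure.restrict_sum_smul_dirac_of_forall_ne _ _ hS hd₀ hother,
    Measure.restrict_restrict hS, Set.inter_eq_left.mpr hSI]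

theorem tendsto_mul_add_div_add {c v : ℝ} {x y : ℕ → ℝ} (hc : c ≠ 0)
    (hx : Tendsto x atTop (𝓝 0)) (hy : Tendsto y atTop (𝓝 0)) :
    Tendsto (fun m => (c * v + x m) / (c + y m)) atTop (𝓝 v) := by
  have hnum : Tendsto (fun m => c * v + x m) atTop (𝓝 (c * v)) := by
    simpa using tendsto_const_nhds.add hx
  have hden : Tendsto (fun m => c + y m) atTop (𝓝 c) := by
    simpa using tendsto_const_nhds.add hy
  have := hnum.div hden hc
  rwa [mul_div_cancel_left₀ v hc] at this

theorem density_value_at_atom_is_limit_of_ratios_general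
    (I : Set ℝ) (hIfin : volume I < ⊤)
    (n : ℕ) (t : Fin n → ℝ) (htinj : Function.Injective t)
    (w : Fin n → ℝ) (hw : ∀ d, 0 < w d)
    (h : ℝ → ℝ)
    (hint : IntegrableOn h I volume)
    (d₀ : Fin n)
    (A : ℕ → Set ℝ) (hA : Antitone A) (hAI : ∀ m, A m ⊆ I)
    (hAconn : ∀ m, (A m).OrdConnected) (hAmem : ∀ m, t d₀ ∈ A m)
    (hAcap : ⋂ m, A m = {t d₀}) :
    Filter.Tendsto
      (fun m => (∫ x in A m, h x ∂(mixedMeasure I n t w)) /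
        ((mixedMeasure I n t w) (A m)).toReal)
      Filter.atTop (nhds (h (t d₀))) := by
  have hAm : ∀ m, MeasurableSet (A m) := fun m => (hAconn m).measurableSet
  have hAfin : ∀ m, volume (A m) ≠ ⊤ := fun m => ((measure_mono (hAI m)).trans_lt hIfin).ne
  have hother : ∀ᶠ m in atTop, ∀ d ≠ d₀, t d ∉ A m :=
    eventually_all.2 fun d => eventually_imp_distrib_left.2 fun hd =>
      hA.eventually_notMem_of_iInter_eq_singleton hAcap (htinj.ne hd)
  have hw₀ : (ENNReal.ofReal (w d₀)).toReal = w d₀ := ENNReal.toReal_ofReal (hw d₀).le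
  refine (tendsto_mul_add_div_add (hw d₀).ne'
    (tendsto_setIntegral_of_antitone_iInter_eq_singleton hAm hA hAcap (hint.mono_set (hAI 0)))
    (tendsto_measureReal_of_antitone_iInter_eq_singleton hAm hA hAcap (hAfin 0))).congr' ?_
  filter_upwards [hother] with m hm
  rw [← measureReal_def, setIntegral_div_measureReal_eq_of_restrict_eq ENNReal.ofReal_ne_top
    (hAfin m) (mixedMeasure_restrict_eq (hAm m) (hAI m) (hAmem m) hm) (hint.mono_set (hAI m)), hw₀]

/-- In the mixed-measure setting, for a nonnegative, measurable, Lebesgue-integrable `h` and a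
decreasing sequence of intervals `A_m ⊆ I` containing the atom `t_{d₀}` and shrinking to
`{t_{d₀}}`, the ratio `(∫_{A_m} h dμ) / μ(A_m)` converges to the density value `h(t_{d₀})`. -/
theorem density_value_at_atom_is_limit_of_ratios
    (I : Set ℝ) (hImeas : MeasurableSet I) (hIconn : I.OrdConnected)
    (hI0 : 0 < volume I) (hIfin : volume I < ⊤)
    (n : ℕ) (t : Fin n → ℝ) (htinj : Function.Injective t) (htI : ∀ d, t d ∈ I)
    (w : Fin n → ℝ) (hw : ∀ d, 0 < w d)
    (h : ℝ → ℝ) (hmeas : Measurable h) (hnn : ∀ x ∈ I, 0 ≤ h x)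
    (hint : IntegrableOn h I volume)
    (d₀ : Fin n)
    (A : ℕ → Set ℝ) (hA : Antitone A) (hAI : ∀ m, A m ⊆ I)
    (hAconn : ∀ m, (A m).OrdConnected) (hAmem : ∀ m, t d₀ ∈ A m)
    (hAcap : ⋂ m, A m = {t d₀}) :
    Filter.Tendsto
      (fun m => (∫ x in A m, h x ∂(mixedMeasure I n t w)) /
        ((mixedMeasure I n t w) (A m)).toReal)
      Filter.atTop (nhds (h (t d₀))) :=
  density_value_at_atom_is_limit_of_ratios_general I hIfin n t htinj w hw h hint d₀ A hA hAI hAconn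
    hAmem hAcap
end

section
/- Let (T, 𝒜, μ) be a σ-finite measure space and let h_j, h_k : T → ℝ be measurable, μ-integrable functions with h_j(t) > 0 and h_k(t) > 0 for all t ∈ T. Let I_t, I_s ∈ 𝒜 with μ(I_t) > 0 and μ(I_s) > 0, and suppose that h_j(t) · h_k(s) < h_j(s) · h_k(t) for all t ∈ I_t and s ∈ I_s (i.e., the odds ratio h_j(t)/h_j(s) is strictly smaller than h_k(t)/h_k(s) pointwise). Then (∫_{I_t} h_j dμ) · (∫_{I_s} h_k dμ) < (∫_{I_s} h_j dμ) · (∫_{I_t} h_k dμ); equivalently, the odds of the probabilities satisfy ℙ_j(I_t)/ℙ_j(I_s) < ℙ_k(I_t)/ℙ_k(I_s), where ℙ_j(A) = ∫_A h_j dμ / ∫_T h_j dμ and ℙ_k(A) = ∫_A h_k dμ / ∫_T h_k dμ. -/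
open MeasureTheory Set

lemma setIntegral_pos_aux {T : Type*} [MeasurableSpace T] (μ : Measure T)
    {f : T → ℝ} {s : Set T} (hsm : MeasurableSet s) (hs : 0 < μ s)
    (hfi : IntegrableOn f s μ) (hf : ∀ x ∈ s, 0 < f x) : 0 < ∫ x in s, f x ∂μ := by
  rw [setIntegral_pos_iff_support_of_nonneg_ae ?_ hfi]
  · exact lt_of_lt_of_le hs (measure_mono fun x hx => ⟨ne_of_gt (hf x hx), hx⟩)
  · filter_upwards [ae_restrict_mem hsm] with x hx using (hf x hx).le

/-- If the pointwise odds ratio `h_j(t)/h_j(s)` is strictly smaller than `h_k(t)/h_k(s)` for all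
`t ∈ I_t`, `s ∈ I_s` (both sets of positive measure), then the same strict inequality holds for
the odds of the corresponding probabilities:
`ℙ_j(I_t)/ℙ_j(I_s) < ℙ_k(I_t)/ℙ_k(I_s)`. -/
theorem odds_ratio_integrated
    {T : Type*} [MeasurableSpace T] (μ : Measure T) [SigmaFinite μ]
    (hj hk : T → ℝ) (hjm : Measurable hj) (hkm : Measurable hk)
    (hji : Integrable hj μ) (hki : Integrable hk μ)
    (hjpos : ∀ x, 0 < hj x) (hkpos : ∀ x, 0 < hk x)
    (It Is : Set T) (hItm : MeasurableSet It) (hIsm : MeasurableSet Is)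
    (hItpos : 0 < μ It) (hIspos : 0 < μ Is)
    (hlt : ∀ x ∈ It, ∀ y ∈ Is, hj x * hk y < hj y * hk x) :
    (∫ x in It, hj x ∂μ) * (∫ x in Is, hk x ∂μ) <
        (∫ x in Is, hj x ∂μ) * (∫ x in It, hk x ∂μ) ∧
      ((∫ x in It, hj x ∂μ) / ∫ x, hj x ∂μ) / ((∫ x in Is, hj x ∂μ) / ∫ x, hj x ∂μ) <
        ((∫ x in It, hk x ∂μ) / ∫ x, hk x ∂μ) / ((∫ x in Is, hk x ∂μ) / ∫ x, hk x ∂μ) := by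
  set ρ : Measure (T × T) := (μ.restrict It).prod (μ.restrict Is) with hρ
  have hρr : ρ = (μ.prod μ).restrict (It ×ˢ Is) := Measure.prod_restrict It Is
  have ijk : Integrable (fun z : T × T => hj z.1 * hk z.2) ρ :=
    (hji.restrict).mul_prod (hki.restrict)
  have ikj : Integrable (fun z : T × T => hj z.2 * hk z.1) ρ := by
    have := (hki.restrict (s := It)).mul_prod (hji.restrict (s := Is))
    exact this.congr (Filter.Eventually.of_forall fun z => mul_comm _ _)
  have key : (∫ x in It, hj x ∂μ) * (∫ x in Is, hk x ∂μ) <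
      (∫ x in Is, hj x ∂μ) * (∫ x in It, hk x ∂μ) := by
    have h1 : (∫ x in It, hj x ∂μ) * (∫ x in Is, hk x ∂μ)
        = ∫ z, hj z.1 * hk z.2 ∂ρ := (integral_prod_mul hj hk).symm
    have h2 : (∫ x in Is, hj x ∂μ) * (∫ x in It, hk x ∂μ)
        = ∫ z, hj z.2 * hk z.1 ∂ρ := by
      rw [mul_comm, ← integral_prod_mul (μ := μ.restrict It) (ν := μ.restrict Is) hk hj]
      congr 1; ext z; ring
    rw [h1, h2, ← sub_pos, ← integral_sub ikj ijk, hρr]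
    refine setIntegral_pos_aux (μ.prod μ) (hItm.prod hIsm) ?_ ?_ ?_
    · rw [Measure.prod_prod]
      exact ENNReal.mul_pos hItpos.ne' hIspos.ne'
    · rw [IntegrableOn, ← hρr]; exact ikj.sub ijk
    · rintro ⟨x, y⟩ ⟨hx, hy⟩
      exact sub_pos.2 (hlt x hx y hy)
  refine ⟨key, ?_⟩
  have hJ : 0 < ∫ x, hj x ∂μ := by
    have := setIntegral_pos_aux μ MeasurableSet.univ
      (lt_of_lt_of_le hItpos (measure_mono (subset_univ _)))
      hji.integrableOn (fun x _ => hjpos x)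
    simpa using this
  have hK : 0 < ∫ x, hk x ∂μ := by
    have := setIntegral_pos_aux μ MeasurableSet.univ
      (lt_of_lt_of_le hItpos (measure_mono (subset_univ _)))
      hki.integrableOn (fun x _ => hkpos x)
    simpa using this
  have hBj : 0 < ∫ x in Is, hj x ∂μ :=
    setIntegral_pos_aux μ hIsm hIspos hji.integrableOn (fun x _ => hjpos x)
  have hBk : 0 < ∫ x in Is, hk x ∂μ :=
    setIntegral_pos_aux μ hIsm hIspos hki.integrableOn (fun x _ => hkpos x)
  have e1 : ∀ (a b c : ℝ), c ≠ 0 → a / c / (b / c) = a / b := by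
    intro a b c hc; field_simp
  rw [e1 _ _ _ hJ.ne', e1 _ _ _ hK.ne', div_lt_div_iff₀ hBj hBk]
  linarith [key]
end
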